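/- With the recursively defined rational functions a_{j,k} as above, one has a_{j,d-i} ≡ 1 modulo y_i for each 1 ≤ j ≤ i−1; that is, writing a_{j,d-i} = (1+f)/(1+g), the rational function a_{j,d-i} − 1 has positive y_i-adic valuation. -/

import Mathlib

open MvPolynomial

/-- The rational function field `F_q(y_1,…,y_{d-1})`. -/
abbrev RatField (p n d : ℕ) [Fact p.Prime] :=
  FractionRing (MvPolynomial (Fin (d - 1)) (GaloisField p n))

/-- The variable `y_m` (`1 ≤ m ≤ d-1`) viewed in `F_q(y_1,…,y_{d-1})`. -/
noncomputable def yv (p n d : ℕ) [Fact p.Prime] (m : ℕ) : RatField p n d :=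
  if h : 1 ≤ m ∧ m ≤ d - 1 then
    algebraMap (MvPolynomial (Fin (d - 1)) (GaloisField p n)) (RatField p n d)
      (X ⟨m - 1, by omega⟩)
  else 0

/-- The product `y_j ⋯ y_k`. -/
noncomputable def prodY (p n d : ℕ) [Fact p.Prime] (j k : ℕ) : RatField p n d :=
  ∏ t ∈ Finset.Icc j k, yv p n d t

/-- The recursively defined rational functions `a_{j,k}`:
`a_{j,1} = (1 − (y_j⋯y_{d-1})^{q-1})/(1 − y_{d-1}^{q-1})` and
`a_{j,k} = (a_{j,k-1}^q − (y_j⋯y_{d-k})^{q^k−q^{k-1}} a_{j,k-1}) /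
(a_{d-k,k-1}^q − y_{d-k}^{q^k−q^{k-1}} a_{d-k,k-1})`, with `q = p^n`. -/
noncomputable def aRec (p n d : ℕ) [Fact p.Prime] : ℕ → ℕ → RatField p n d
  | _, 0 => 0
  | j, 1 => (1 - (prodY p n d j (d - 1)) ^ (p ^ n - 1)) /
      (1 - (yv p n d (d - 1)) ^ (p ^ n - 1))
  | j, (k + 2) =>
      ((aRec p n d j (k + 1)) ^ (p ^ n) -
          (prodY p n d j (d - (k + 2))) ^ ((p ^ n) ^ (k + 2) - (p ^ n) ^ (k + 1)) *
            aRec p n d j (k + 1)) /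
      ((aRec p n d (d - (k + 2)) (k + 1)) ^ (p ^ n) -
          (yv p n d (d - (k + 2))) ^ ((p ^ n) ^ (k + 2) - (p ^ n) ^ (k + 1)) *
            aRec p n d (d - (k + 2)) (k + 1))

/-! The denominator of `a_{j,k+2}` does not depend on `j`, and for `j = d-k-2` the numerator
equals it, so `a_{d-k,k} = 1` and `a_{j,d-i} - 1 = a_{j,d-i} - a_{i,d-i}`. The congruence
`a_{j,r} ≡ a_{i,r} (mod y_i)` for `j ≤ i` then goes by induction on `r ≤ d - i`: both products
`y_j ⋯ y_{d-r}` and `y_i ⋯ y_{d-r}` contain `y_i`, and `x ↦ x^q` is additive in characteristic `p`.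
Dividing by the denominators is harmless because `a_{m,k}` is a `y_m`-adic unit, has no pole at
`y_t` for `t ≤ d - k`, and involves only `y_m, …, y_{d-1}`; a nonzero function of
`y_m, …, y_{d-1}` is a unit at every `y_t` with `t < m`. -/

section PrimeValuation

variable {R K : Type*} [CommRing R] [Field K] [Algebra R K] {π : R} {x y : K}

def ValPos (π : R) (x : K) : Prop :=
  ∃ a b : R, π ∣ a ∧ ¬ π ∣ b ∧ x = algebraMap R K a / algebraMap R K b

def ValNonneg (π : R) (x : K) : Prop :=
  ∃ a b : R, ¬ π ∣ b ∧ x = algebraMap R K a / algebraMap R K b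

def ValZero (π : R) (x : K) : Prop :=
  ∃ a b : R, ¬ π ∣ a ∧ ¬ π ∣ b ∧ x = algebraMap R K a / algebraMap R K b

theorem ValPos.valNonneg (hx : ValPos π x) : ValNonneg π x :=
  let ⟨a, b, _, hb, h⟩ := hx; ⟨a, b, hb, h⟩

theorem ValZero.valNonneg (hx : ValZero π x) : ValNonneg π x :=
  let ⟨a, b, _, hb, h⟩ := hx; ⟨a, b, hb, h⟩

theorem ValZero.inv (hx : ValZero π x) : ValZero π x⁻¹ :=
  let ⟨a, b, ha, hb, h⟩ := hx; ⟨b, a, hb, ha, by rw [h, inv_div]⟩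

theorem valPos_algebraMap (hπ : Prime π) {a : R} (ha : π ∣ a) : ValPos π (algebraMap R K a) :=
  ⟨a, 1, ha, hπ.not_dvd_one, by rw [map_one, div_one]⟩

theorem valNonneg_algebraMap (hπ : Prime π) (a : R) : ValNonneg π (algebraMap R K a) :=
  ⟨a, 1, hπ.not_dvd_one, by rw [map_one, div_one]⟩

theorem valZero_one (hπ : Prime π) : ValZero π (1 : K) :=
  ⟨1, 1, hπ.not_dvd_one, hπ.not_dvd_one, by rw [map_one, div_one]⟩

theorem valPos_zero (hπ : Prime π) : ValPos π (0 : K) :=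
  ⟨0, 1, dvd_zero π, hπ.not_dvd_one, by rw [map_zero, zero_div]⟩

theorem ValNonneg.mul (hπ : Prime π) (hx : ValNonneg π x) (hy : ValNonneg π y) :
    ValNonneg π (x * y) := by
  obtain ⟨a, b, hb, rfl⟩ := hx
  obtain ⟨c, e, he, rfl⟩ := hy
  exact ⟨a * c, b * e, hπ.not_dvd_mul hb he, by rw [map_mul, map_mul, div_mul_div_comm]⟩

theorem ValPos.mul (hπ : Prime π) (hx : ValPos π x) (hy : ValNonneg π y) :
    ValPos π (x * y) := by
  obtain ⟨a, b, ha, hb, rfl⟩ := hx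
  obtain ⟨c, e, he, rfl⟩ := hy
  exact ⟨a * c, b * e, ha.mul_right c, hπ.not_dvd_mul hb he,
    by rw [map_mul, map_mul, div_mul_div_comm]⟩

theorem ValZero.mul (hπ : Prime π) (hx : ValZero π x) (hy : ValZero π y) :
    ValZero π (x * y) := by
  obtain ⟨a, b, ha, hb, rfl⟩ := hx
  obtain ⟨c, e, hc, he, rfl⟩ := hy
  exact ⟨a * c, b * e, hπ.not_dvd_mul ha hc, hπ.not_dvd_mul hb he,
    by rw [map_mul, map_mul, div_mul_div_comm]⟩

theorem ValNonneg.pow (hπ : Prime π) (hx : ValNonneg π x) (e : ℕ) : ValNonneg π (x ^ e) := by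
  induction e with
  | zero => exact pow_zero x ▸ (valZero_one hπ).valNonneg
  | succ e ih => exact pow_succ x e ▸ ih.mul hπ hx

theorem ValZero.pow (hπ : Prime π) (hx : ValZero π x) (e : ℕ) : ValZero π (x ^ e) := by
  induction e with
  | zero => exact pow_zero x ▸ valZero_one hπ
  | succ e ih => exact pow_succ x e ▸ ih.mul hπ hx

theorem ValPos.pow (hπ : Prime π) (hx : ValPos π x) {e : ℕ} (he : e ≠ 0) : ValPos π (x ^ e) := by
  obtain ⟨e, rfl⟩ := Nat.exists_eq_succ_of_ne_zero he
  exact pow_succ' x e ▸ hx.mul hπ (hx.valNonneg.pow hπ e)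

theorem ValNonneg.div (hπ : Prime π) (hx : ValNonneg π x) (hy : ValZero π y) :
    ValNonneg π (x / y) :=
  div_eq_mul_inv x y ▸ hx.mul hπ hy.inv.valNonneg

theorem ValPos.div (hπ : Prime π) (hx : ValPos π x) (hy : ValZero π y) : ValPos π (x / y) :=
  div_eq_mul_inv x y ▸ hx.mul hπ hy.inv.valNonneg

theorem ValZero.div (hπ : Prime π) (hx : ValZero π x) (hy : ValZero π y) : ValZero π (x / y) :=
  div_eq_mul_inv x y ▸ hx.mul hπ hy.inv

variable [IsFractionRing R K]

theorem algebraMap_ne_zero_of_not_dvd {b : R} (hb : ¬ π ∣ b) : algebraMap R K b ≠ 0 :=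
  (map_ne_zero_iff _ (IsFractionRing.injective R K)).mpr (by rintro rfl; exact hb (dvd_zero π))

theorem ValZero.ne_zero (hx : ValZero π x) : x ≠ 0 := by
  obtain ⟨a, b, ha, hb, rfl⟩ := hx
  exact div_ne_zero (algebraMap_ne_zero_of_not_dvd ha) (algebraMap_ne_zero_of_not_dvd hb)

theorem algebraMap_div_sub_div_of_not_dvd {a b c e : R} (hb : ¬ π ∣ b) (he : ¬ π ∣ e) :
    algebraMap R K a / algebraMap R K b - algebraMap R K c / algebraMap R K e =
      algebraMap R K (a * e - b * c) / algebraMap R K (b * e) := by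
  rw [div_sub_div _ _ (algebraMap_ne_zero_of_not_dvd hb) (algebraMap_ne_zero_of_not_dvd he),
    map_sub, map_mul, map_mul, map_mul]

theorem ValPos.sub (hπ : Prime π) (hx : ValPos π x) (hy : ValPos π y) : ValPos π (x - y) := by
  obtain ⟨a, b, ha, hb, rfl⟩ := hx
  obtain ⟨c, e, hc, he, rfl⟩ := hy
  exact ⟨_, _, dvd_sub (ha.mul_right e) (hc.mul_left b), hπ.not_dvd_mul hb he,
    algebraMap_div_sub_div_of_not_dvd hb he⟩

theorem ValNonneg.sub (hπ : Prime π) (hx : ValNonneg π x) (hy : ValNonneg π y) :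
    ValNonneg π (x - y) := by
  obtain ⟨a, b, hb, rfl⟩ := hx
  obtain ⟨c, e, he, rfl⟩ := hy
  exact ⟨_, _, hπ.not_dvd_mul hb he, algebraMap_div_sub_div_of_not_dvd hb he⟩

theorem ValZero.sub (hπ : Prime π) (hx : ValZero π x) (hy : ValPos π y) : ValZero π (x - y) := by
  obtain ⟨a, b, ha, hb, rfl⟩ := hx
  obtain ⟨c, e, hc, he, rfl⟩ := hy
  refine ⟨_, _, fun h => ?_, hπ.not_dvd_mul hb he, algebraMap_div_sub_div_of_not_dvd hb he⟩
  exact hπ.not_dvd_mul ha he ((dvd_sub_left (hc.mul_left b)).mp h)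

theorem ValZero.pow_sub_mul (hπ : Prime π) (hx : ValZero π x) {u : K} (hu : ValPos π u) (q : ℕ) :
    ValZero π (x ^ q - u * x) :=
  (hx.pow hπ q).sub hπ (hu.mul hπ hx.valNonneg)

theorem ValPos.frobenius_sub_mul_sub (hπ : Prime π) (ℓ : ℕ) [ExpChar K ℓ] (e : ℕ) {u v : K}
    (hxy : ValPos π (x - y)) (hx : ValNonneg π x) (hy : ValNonneg π y) (hu : ValPos π u)
    (hv : ValPos π v) :
    ValPos π ((x ^ ℓ ^ e - u * x) - (y ^ ℓ ^ e - v * y)) := by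
  have hfrob : (x ^ ℓ ^ e - u * x) - (y ^ ℓ ^ e - v * y) = (x - y) ^ ℓ ^ e - (u * x - v * y) := by
    rw [sub_pow_expChar_pow]; ring
  rw [hfrob]
  exact (hxy.pow hπ (expChar_pow_pos K ℓ e).ne').sub hπ ((hu.mul hπ hx).sub hπ (hv.mul hπ hy))

end PrimeValuation

namespace MvPolynomial

variable {σ k : Type*} [CommRing k] {s : Set σ} {i : σ}

theorem not_X_dvd_of_mem_supported (hi : i ∉ s) {f : MvPolynomial σ k}
    (hf : f ∈ supported k s) (h0 : f ≠ 0) : ¬ X i ∣ f := by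
  rintro ⟨g, rfl⟩
  have hdeg : (g * X i).degreeOf i = g.degreeOf i + 1 :=
    (degreeOf_mul_X_eq_degreeOf_add_one_iff i g).mpr (right_ne_zero_of_mul h0)
  refine hi (mem_supported.mp hf (mem_vars_iff_degreeOf_ne_zero.mpr ?_))
  rw [mul_comm, hdeg]
  exact Nat.succ_ne_zero _

variable (k) (K : Type*) [Field K] [Algebra (MvPolynomial σ k) K]

def supportedFractions (s : Set σ) : Subfield K :=
  Subfield.closure ((supported k s).toSubring.map (algebraMap (MvPolynomial σ k) K))

variable {k K}

theorem valZero_X_of_mem_supportedFractions [IsFractionRing (MvPolynomial σ k) K] (hi : i ∉ s)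
    {x : K} (hx : x ∈ supportedFractions k K s) (h0 : x ≠ 0) :
    ValZero (X i : MvPolynomial σ k) x := by
  obtain ⟨_, hy, _, hz, rfl⟩ := Subfield.mem_closure_iff.mp hx
  rw [Subring.closure_eq] at hy hz
  obtain ⟨a, ha, rfl⟩ := Subring.mem_map.mp hy
  obtain ⟨b, hb, rfl⟩ := Subring.mem_map.mp hz
  have ha0 : a ≠ 0 := by rintro rfl; simp at h0
  have hb0 : b ≠ 0 := by rintro rfl; simp at h0
  exact ⟨a, b, not_X_dvd_of_mem_supported hi ha ha0, not_X_dvd_of_mem_supported hi hb hb0, rfl⟩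

end MvPolynomial

section Recursion

variable {p n d : ℕ} [Fact p.Prime]

local notation "𝒫" => MvPolynomial (Fin (d - 1)) (GaloisField p n)

/-- Rational functions of `y_m, …, y_{d-1}` alone; the variable `X w` is `y_{w+1}`. -/
noncomputable abbrev upperFractions (p n d : ℕ) [Fact p.Prime] (m : ℕ) :
    Subfield (RatField p n d) :=
  supportedFractions (GaloisField p n) (RatField p n d) {w : Fin (d - 1) | m ≤ (w : ℕ) + 1}

theorem one_lt_prime_pow (hn : 0 < n) : 1 < p ^ n :=
  Nat.one_lt_pow hn.ne' (Fact.out : p.Prime).one_lt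

theorem prime_pow_sub_one_ne_zero (hn : 0 < n) : p ^ n - 1 ≠ 0 :=
  Nat.sub_ne_zero_of_lt (one_lt_prime_pow hn)

theorem prime_pow_pow_sub_ne_zero (hn : 0 < n) (k : ℕ) :
    (p ^ n) ^ (k + 2) - (p ^ n) ^ (k + 1) ≠ 0 :=
  Nat.sub_ne_zero_of_lt (Nat.pow_lt_pow_right (one_lt_prime_pow hn) (lt_add_one _))

theorem yv_succ (w : Fin (d - 1)) :
    yv p n d ((w : ℕ) + 1) = algebraMap 𝒫 (RatField p n d) (X w) := by
  rw [yv, dif_pos ⟨by omega, by omega⟩]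
  rfl

theorem yv_mem_upperFractions {m t : ℕ} (hmt : m ≤ t) : yv p n d t ∈ upperFractions p n d m := by
  unfold yv
  split_ifs with ht
  · have hX : X ⟨t - 1, by omega⟩ ∈ supported (GaloisField p n) {w : Fin (d - 1) | m ≤ w + 1} :=
      X_mem_supported.mpr (by simp only [Set.mem_ofPred_eq]; omega)
    exact Subfield.subset_closure (Subring.mem_map.mpr ⟨_, hX, rfl⟩)
  · exact zero_mem _

theorem prodY_mem_upperFractions {m j : ℕ} (hmj : m ≤ j) (k : ℕ) :
    prodY p n d j k ∈ upperFractions p n d m :=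
  prod_mem fun _ ht => yv_mem_upperFractions (hmj.trans (Finset.mem_Icc.mp ht).1)

theorem upperFractions_mono {m m' : ℕ} (h : m ≤ m') :
    upperFractions p n d m' ≤ upperFractions p n d m :=
  Subfield.closure_mono fun _ ⟨a, ha, hx⟩ => ⟨a, supported_mono (fun _ hw => h.trans hw) ha, hx⟩

theorem valZero_of_mem_upperFractions {v w : Fin (d - 1)} (hwv : w ≤ v) {x : RatField p n d}
    (hx : x ∈ upperFractions p n d (v + 1)) (hv : ValZero (X v : 𝒫) x) : ValZero (X w : 𝒫) x := by
  rcases hwv.eq_or_lt with rfl | hlt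
  · exact hv
  · exact valZero_X_of_mem_supportedFractions (by simpa using hlt) hx hv.ne_zero

theorem valNonneg_yv (w : Fin (d - 1)) (t : ℕ) : ValNonneg (X w : 𝒫) (yv p n d t) := by
  unfold yv
  split_ifs
  · exact valNonneg_algebraMap X_prime _
  · exact (valPos_zero X_prime).valNonneg

theorem valPos_yv (w : Fin (d - 1)) : ValPos (X w : 𝒫) (yv p n d ((w : ℕ) + 1)) := by
  rw [yv_succ]
  exact valPos_algebraMap X_prime dvd_rfl

theorem valNonneg_prod_yv (w : Fin (d - 1)) (s : Finset ℕ) :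
    ValNonneg (X w : 𝒫) (∏ t ∈ s, yv p n d t) :=
  Finset.prod_induction _ _ (fun _ _ hx hy => hx.mul X_prime hy) (valZero_one X_prime).valNonneg
    fun t _ => valNonneg_yv w t

theorem valPos_prodY (w : Fin (d - 1)) {j k : ℕ} (hj : j ≤ w + 1) (hk : w + 1 ≤ k) :
    ValPos (X w : 𝒫) (prodY p n d j k) := by
  rw [prodY, ← Finset.mul_prod_erase _ _ (Finset.mem_Icc.mpr ⟨hj, hk⟩)]
  exact (valPos_yv w).mul X_prime (valNonneg_prod_yv w _)

theorem aRec_one (j : ℕ) : aRec p n d j 1 =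
    (1 - prodY p n d j (d - 1) ^ (p ^ n - 1)) / (1 - yv p n d (d - 1) ^ (p ^ n - 1)) := by
  rw [aRec]

noncomputable def aRecDen (p n d : ℕ) [Fact p.Prime] (k : ℕ) : RatField p n d :=
  aRec p n d (d - (k + 2)) (k + 1) ^ p ^ n -
    yv p n d (d - (k + 2)) ^ ((p ^ n) ^ (k + 2) - (p ^ n) ^ (k + 1)) *
      aRec p n d (d - (k + 2)) (k + 1)

theorem aRec_add_two (j k : ℕ) : aRec p n d j (k + 2) =
    (aRec p n d j (k + 1) ^ p ^ n -
      prodY p n d j (d - (k + 2)) ^ ((p ^ n) ^ (k + 2) - (p ^ n) ^ (k + 1)) *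
        aRec p n d j (k + 1)) / aRecDen p n d k := by
  rw [aRec, aRecDen]

theorem aRec_mem_upperFractions {j k : ℕ} (h : j + k ≤ d) :
    aRec p n d j k ∈ upperFractions p n d j := by
  induction k using Nat.twoStepInduction generalizing j with
  | zero => rw [aRec]; exact zero_mem _
  | one =>
    rw [aRec_one]
    exact div_mem (sub_mem (one_mem _) (pow_mem (prodY_mem_upperFractions le_rfl _) _))
      (sub_mem (one_mem _) (pow_mem (yv_mem_upperFractions (by omega)) _))
  | more k _ ih =>
    have hden : aRecDen p n d k ∈ upperFractions p n d (d - (k + 2)) :=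
      sub_mem (pow_mem (ih (by omega)) _)
        (mul_mem (pow_mem (yv_mem_upperFractions le_rfl) _) (ih (by omega)))
    rw [aRec_add_two]
    exact div_mem (sub_mem (pow_mem (ih (by omega)) _)
      (mul_mem (pow_mem (prodY_mem_upperFractions le_rfl _) _) (ih (by omega))))
      (upperFractions_mono (by omega) hden)

theorem valZero_one_sub_yv_pow (hn : 0 < n) (w : Fin (d - 1)) :
    ValZero (X w : 𝒫) (1 - yv p n d (d - 1) ^ (p ^ n - 1)) := by
  have hw := w.isLt
  let v : Fin (d - 1) := ⟨d - 2, by omega⟩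
  have hv : yv p n d (d - 1) = yv p n d ((v : ℕ) + 1) := congrArg _ (by simp only [v]; omega)
  have hq := prime_pow_sub_one_ne_zero (p := p) hn
  rw [hv]
  exact valZero_of_mem_upperFractions (Fin.le_def.mpr (by simp only [v]; omega))
    (sub_mem (one_mem _) (pow_mem (yv_mem_upperFractions le_rfl) _))
    ((valZero_one X_prime).sub X_prime ((valPos_yv v).pow X_prime hq))

theorem valZero_aRecDen_of (hn : 0 < n) {k : ℕ} (w : Fin (d - 1)) (hw : w + 1 + (k + 2) ≤ d)
    (h : ∀ v : Fin (d - 1), v + 1 + (k + 1) ≤ d → ValZero (X v : 𝒫) (aRec p n d (v + 1) (k + 1))) :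
    ValZero (X w : 𝒫) (aRecDen p n d k) := by
  let v : Fin (d - 1) := ⟨d - (k + 3), by omega⟩
  have hv : d - (k + 2) = (v : ℕ) + 1 := by simp only [v]; omega
  unfold aRecDen
  rw [hv]
  exact valZero_of_mem_upperFractions (Fin.le_def.mpr (by simp only [v]; omega))
    (sub_mem (pow_mem (aRec_mem_upperFractions (by omega)) _)
      (mul_mem (pow_mem (yv_mem_upperFractions le_rfl) _) (aRec_mem_upperFractions (by omega))))
    ((h v (by simp only [v]; omega)).pow_sub_mul X_prime
      ((valPos_yv v).pow X_prime (prime_pow_pow_sub_ne_zero hn k)) _)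

theorem valZero_aRec (hn : 0 < n) {k : ℕ} (hk : k ≠ 0) (v : Fin (d - 1)) (hvk : v + 1 + k ≤ d) :
    ValZero (X v : 𝒫) (aRec p n d (v + 1) k) := by
  induction k using Nat.twoStepInduction generalizing v with
  | zero => contradiction
  | one =>
    have hq := prime_pow_sub_one_ne_zero (p := p) hn
    rw [aRec_one]
    exact ((valZero_one X_prime).sub X_prime
      ((valPos_prodY v le_rfl (by omega)).pow X_prime hq)).div X_prime
      (valZero_one_sub_yv_pow hn v)
  | more k _ ih =>
    rw [aRec_add_two]
    exact ((ih (by omega) v (by omega)).pow_sub_mul X_prime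
      ((valPos_prodY v le_rfl (by omega)).pow X_prime (prime_pow_pow_sub_ne_zero hn k)) _).div
      X_prime (valZero_aRecDen_of hn v hvk fun v' hv' => ih (by omega) v' hv')

theorem valZero_aRecDen (hn : 0 < n) {k : ℕ} (w : Fin (d - 1)) (hw : w + 1 + (k + 2) ≤ d) :
    ValZero (X w : 𝒫) (aRecDen p n d k) :=
  valZero_aRecDen_of hn w hw fun v hv => valZero_aRec hn (by omega) v hv

theorem valNonneg_aRec (hn : 0 < n) (j : ℕ) {k : ℕ} (w : Fin (d - 1)) (hw : w + 1 + k ≤ d) :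
    ValNonneg (X w : 𝒫) (aRec p n d j k) := by
  induction k using Nat.twoStepInduction with
  | zero => rw [aRec]; exact (valPos_zero X_prime).valNonneg
  | one =>
    rw [aRec_one]
    exact ((valZero_one X_prime).valNonneg.sub X_prime
      ((valNonneg_prod_yv w _).pow X_prime _)).div X_prime (valZero_one_sub_yv_pow hn w)
  | more k _ ih =>
    rw [aRec_add_two]
    exact (((ih (by omega)).pow X_prime _).sub X_prime
      (((valNonneg_prod_yv w _).pow X_prime _).mul X_prime (ih (by omega)))).div X_prime
      (valZero_aRecDen hn w hw)

theorem valPos_aRec_sub_aRec (hn : 0 < n) {j : ℕ} (v : Fin (d - 1)) (hj : j ≤ v + 1) {r : ℕ}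
    (hr : v + 1 + r ≤ d) : ValPos (X v : 𝒫) (aRec p n d j r - aRec p n d (v + 1) r) := by
  induction r using Nat.twoStepInduction with
  | zero => rw [aRec, aRec, sub_zero]; exact valPos_zero X_prime
  | one =>
    have hq := prime_pow_sub_one_ne_zero (p := p) hn
    rw [aRec_one, aRec_one, div_sub_div_same, sub_sub_sub_cancel_left]
    exact (((valPos_prodY v le_rfl (by omega)).pow X_prime hq).sub X_prime
      ((valPos_prodY v hj (by omega)).pow X_prime hq)).div X_prime (valZero_one_sub_yv_pow hn v)
  | more r _ ih =>
    have he := prime_pow_pow_sub_ne_zero (p := p) hn r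
    rw [aRec_add_two, aRec_add_two, div_sub_div_same]
    exact ((ih (by omega)).frobenius_sub_mul_sub X_prime p n
      (valNonneg_aRec hn j v (by omega)) (valNonneg_aRec hn _ v (by omega))
      ((valPos_prodY v hj (by omega)).pow X_prime he)
      ((valPos_prodY v le_rfl (by omega)).pow X_prime he)).div X_prime
      (valZero_aRecDen hn v (by omega))

theorem aRec_sub_self (hn : 0 < n) {k : ℕ} (hk : k ≠ 0) (hkd : k < d) :
    aRec p n d (d - k) k = 1 := by
  match k with
  | 1 =>
    rw [aRec_one, prodY, Finset.Icc_self, Finset.prod_singleton]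
    exact div_self (valZero_one_sub_yv_pow hn ⟨0, by omega⟩).ne_zero
  | k + 2 =>
    rw [aRec_add_two, prodY, Finset.Icc_self, Finset.prod_singleton]
    exact div_self (valZero_aRecDen hn ⟨0, by omega⟩ (by simp only; omega)).ne_zero

end Recursion

/-- **Congruence `a_{j,d-i} ≡ 1 (mod y_i)`.**  For `1 ≤ j ≤ i-1`, the rational function
`a_{j,d-i} − 1` has positive `y_i`-adic valuation: it can be written `A/B` with `A`
divisible by `y_i` and `B` not divisible by `y_i`. -/
theorem aRec_congruent_one_mod_yi
    (p n d i : ℕ) [Fact p.Prime] (hn : 0 < n)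
    (hi : 1 ≤ i) (hid : i ≤ d - 1) :
    ∀ j : ℕ, 1 ≤ j → j ≤ i - 1 →
      ∃ A B : MvPolynomial (Fin (d - 1)) (GaloisField p n),
        (X ⟨i - 1, by omega⟩ ∣ A) ∧ ¬ (X ⟨i - 1, by omega⟩ ∣ B) ∧
        aRec p n d j (d - i) - 1 =
          algebraMap (MvPolynomial (Fin (d - 1)) (GaloisField p n)) (RatField p n d) A /
            algebraMap (MvPolynomial (Fin (d - 1)) (GaloisField p n)) (RatField p n d) B := by
  intro j _ hji
  have hdiag : aRec p n d i (d - i) = 1 := by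
    simpa only [Nat.sub_sub_self (by omega : i ≤ d)] using
      aRec_sub_self (p := p) (d := d) hn (k := d - i) (by omega) (by omega)
  have hcong := valPos_aRec_sub_aRec (p := p) hn (⟨i - 1, by omega⟩ : Fin (d - 1))
    (show j ≤ i - 1 + 1 by omega) (r := d - i) (show i - 1 + 1 + (d - i) ≤ d by omega)
  simp only [Nat.sub_add_cancel hi, hdiag] at hcong
  exact hcong
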